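/- Let B be a compact basis in M_{I,J}(ℝ). A coupling π ∈ Π(P,Q) has positive extreme dependence with respect to B if and only if there exists M ∈ B such that Tr(Mᵀ σ_π) = sup over all π̃ ∈ Π(P,Q) of Tr(Mᵀ σ_{π̃}). -/

import Mathlib

open MeasureTheory Matrix

/-- The set of couplings of `P` and `Q`. -/
def couplings {I J : ℕ} (P : Measure (Fin I → ℝ)) (Q : Measure (Fin J → ℝ)) :
    Set (Measure ((Fin I → ℝ) × (Fin J → ℝ))) :=
  {π | IsProbabilityMeasure π ∧ π.map Prod.fst = P ∧ π.map Prod.snd = Q}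

/-- The cross-covariance matrix of a coupling. -/
noncomputable def crossCov {I J : ℕ} (π : Measure ((Fin I → ℝ) × (Fin J → ℝ))) :
    Matrix (Fin I) (Fin J) ℝ :=
  Matrix.of fun i j => ∫ p, p.1 i * p.2 j ∂π

/-- The dual cone `K(B)` of a set of matrices `B`, for the trace pairing. -/
def dualCone {I J : ℕ} (B : Set (Matrix (Fin I) (Fin J) ℝ)) :
    Set (Matrix (Fin I) (Fin J) ℝ) :=
  {N | ∀ M ∈ B, 0 ≤ (M.transpose * N).trace}

/-!
If `M ∈ B` maximises `Tr(Mᵀ ·)` over the set `S` of cross-covariance matrices at `σ_π`, then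
`Tr(Mᵀ D) > 0` for every `D ∈ int K(B)`, so no `σ' ∈ S` has `σ' - σ_π ∈ int K(B)`.

Conversely, `int K(B)` is an open convex cone, nonempty because `B` is compact, convex and
avoids `0`. Separating it from the convex set `S - σ_π` gives `N ≠ 0` with `Tr(Nᵀ ·) ≥ 0` on
`K(B)` and `σ_π` maximising `Tr(Nᵀ ·)` on `S`. By the bipolar theorem `N` lies in the cone
`[0, ∞) • B`, which is closed since `B` is compact and avoids `0`; hence `N = c • M` with
`c > 0` and `M ∈ B`.
-/

open Set
open Filter Topology
open scoped Pointwise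

instance {m n : Type*} : LocallyConvexSpace ℝ (Matrix m n ℝ) :=
  inferInstanceAs (LocallyConvexSpace ℝ (m → n → ℝ))

theorem isMaxOn_iff_eq_csSup {α β : Type*} [ConditionallyCompleteLattice β] {f : α → β}
    {s : Set α} {a : α} (ha : a ∈ s) (hbdd : BddAbove (f '' s)) :
    IsMaxOn f s a ↔ f a = sSup (f '' s) :=
  ⟨fun h => (IsGreatest.csSup_eq ⟨mem_image_of_mem f ha, forall_mem_image.2 h⟩).symm,
    fun h _ hx => h ▸ le_csSup hbdd (mem_image_of_mem f hx)⟩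

section Cone

variable {E : Type*} [AddCommGroup E] [Module ℝ E]

theorem convex_Ici_smul {B : Set E} (hB : Convex ℝ B) : Convex ℝ (Ici (0 : ℝ) • B) := by
  rintro _ ⟨c₁, hc₁, M₁, hM₁, rfl⟩ _ ⟨c₂, hc₂, M₂, hM₂, rfl⟩ a b ha hb -
  rw [mem_Ici] at hc₁ hc₂
  have hmem : a • c₁ • M₁ + b • c₂ • M₂ ∈ (a * c₁ + b * c₂) • B := by
    rw [smul_smul, smul_smul, hB.add_smul (by positivity) (by positivity)]
    exact add_mem_add (smul_mem_smul_set hM₁) (smul_mem_smul_set hM₂)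
  obtain ⟨M, hM, hM_eq⟩ := hmem
  exact ⟨_, mem_Ici.2 (by positivity), M, hM, hM_eq⟩

variable [TopologicalSpace E] [IsTopologicalAddGroup E] [ContinuousSMul ℝ E]

theorem exists_strongDual_pos_of_zero_notMem [LocallyConvexSpace ℝ E] {B : Set E}
    (hBc : IsClosed B) (hBconv : Convex ℝ B) (hB0 : (0 : E) ∉ B) :
    ∃ f : StrongDual ℝ E, ∀ x ∈ B, 0 < f x := by
  obtain ⟨f, u, hf0, hfB⟩ := geometric_hahn_banach_point_closed hBconv hBc hB0
  exact ⟨f, fun x hx => by simpa using hf0.trans (hfB x hx)⟩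

theorem isClosed_Ici_smul [T2Space E] [LocallyConvexSpace ℝ E] {B : Set E}
    (hBc : IsCompact B) (hBconv : Convex ℝ B) (hB0 : (0 : E) ∉ B) :
    IsClosed (Ici (0 : ℝ) • B) := by
  rcases B.eq_empty_or_nonempty with rfl | hBne
  · simp
  obtain ⟨f, hf⟩ := exists_strongDual_pos_of_zero_notMem hBc.isClosed hBconv hB0
  obtain ⟨M₀, hM₀, hmin⟩ := hBc.exists_isMinOn hBne f.continuous.continuousOn
  refine isClosed_of_closure_subset fun x hx => ?_
  set R := f x + 1
  -- near `x` the cone only meets its compact part `Icc 0 (R / f M₀) • B`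
  have hx' : x ∈ closure ({y | f y < R} ∩ Ici (0 : ℝ) • B) :=
    (isOpen_lt f.continuous continuous_const).inter_closure ⟨by simp [R], hx⟩
  have hsub : {y | f y < R} ∩ Ici (0 : ℝ) • B ⊆ Icc 0 (R / f M₀) • B := by
    rintro _ ⟨hy, c, hc, M, hM, rfl⟩
    refine ⟨c, ⟨hc, ?_⟩, M, hM, rfl⟩
    have : c * f M₀ ≤ c * f M := mul_le_mul_of_nonneg_left (hmin hM) hc
    rw [le_div_iff₀ (hf M₀ hM₀)]
    simp only [mem_ofPred_eq, map_smul, smul_eq_mul] at hy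
    linarith
  exact smul_subset_smul_right Icc_subset_Ici_self
    ((isCompact_Icc.smul_set hBc).isClosed.closure_subset_iff.2 hsub hx')

theorem exists_strongDual_neg_isMinOn_of_disjoint_cone {C S : Set E} (hCo : IsOpen C)
    (hCconv : Convex ℝ C) (hCsmul : ∀ k ∈ C, ∀ t : ℝ, 0 < t → t • k ∈ C) (hCne : C.Nonempty)
    (hS : Convex ℝ S) {σ : E} (hσ : σ ∈ S) (h : ∀ X ∈ S, X - σ ∉ C) :
    ∃ f : StrongDual ℝ E, (∀ k ∈ C, f k < 0) ∧ IsMinOn f S σ := by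
  have hdisj : Disjoint C (S - {σ}) := by
    rw [disjoint_left]
    rintro _ hk ⟨X, hX, _, rfl, rfl⟩
    exact h X hX hk
  obtain ⟨f, u, hfC, hfS⟩ :=
    geometric_hahn_banach_open hCconv hCo (hS.sub (convex_singleton σ)) hdisj
  have hu_nonpos : u ≤ 0 := by simpa using hfS _ (sub_mem_sub hσ rfl)
  have hf_neg : ∀ k ∈ C, f k < 0 := fun k hk => (hfC k hk).trans_le hu_nonpos
  -- rescaling a point of the cone `C` makes `f` take the value `u`
  have hu_nonneg : 0 ≤ u := by
    obtain ⟨k, hk⟩ := hCne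
    by_contra! hu
    have := hfC _ (hCsmul k hk (u / f k) (div_pos_of_neg_of_neg hu (hf_neg k hk)))
    rw [map_smul, smul_eq_mul, div_mul_cancel₀ _ (hf_neg k hk).ne] at this
    exact this.false
  refine ⟨f, hf_neg, isMinOn_iff.2 fun X hX => ?_⟩
  have := hfS _ (sub_mem_sub hX rfl)
  rw [map_sub] at this
  linarith

end Cone

section TracePairing

variable {m n R : Type*} [Fintype m] [Fintype n]

theorem trace_transpose_mul_comm [CommSemiring R] (M N : Matrix m n R) :
    (Mᵀ * N).trace = (Nᵀ * M).trace := by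
  rw [← trace_transpose, transpose_mul, transpose_transpose]

theorem trace_transpose_mul_self_pos {M : Matrix m n ℝ} (hM : M ≠ 0) : 0 < (Mᵀ * M).trace := by
  rw [← conjTranspose_eq_transpose_of_trivial]
  exact (posSemidef_conjTranspose_mul_self M).trace_nonneg.lt_of_ne'
    (trace_conjTranspose_mul_self_eq_zero_iff.not.2 hM)

theorem exists_eq_trace_transpose_mul [CommSemiring R] (f : Matrix m n R →ₗ[R] R) :
    ∃ N : Matrix m n R, ∀ X, f X = (Nᵀ * X).trace := by
  classical
  refine ⟨of fun i j => f (single i j 1), fun X => ?_⟩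
  conv_lhs => rw [matrix_eq_sum_single X]
  simp only [map_sum, trace, diag, mul_apply, transpose_apply, of_apply]
  rw [Finset.sum_comm]
  refine Finset.sum_congr rfl fun i _ => Finset.sum_congr rfl fun j _ => ?_
  have hsingle : single j i (X j i) = X j i • single j i (1 : R) := by
    rw [smul_single, smul_eq_mul, mul_one]
  rw [hsingle, map_smul, smul_eq_mul, mul_comm]

theorem bddAbove_trace_transpose_mul_image {S : Set (Matrix m n ℝ)} {C : ℝ}
    (hS : ∀ X ∈ S, ∀ i j, |X i j| ≤ C) (M : Matrix m n ℝ) :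
    BddAbove ((fun X => (Mᵀ * X).trace) '' S) := by
  refine ⟨∑ j, ∑ i, |M i j| * C, forall_mem_image.2 fun X hX => ?_⟩
  simp only [trace, diag, mul_apply, transpose_apply]
  refine Finset.sum_le_sum fun j _ => Finset.sum_le_sum fun i _ => ?_
  exact (le_abs_self _).trans ((abs_mul _ _).trans_le
    (mul_le_mul_of_nonneg_left (hS X hX i j) (abs_nonneg _)))

end TracePairing

section DualCone

variable {I J : ℕ} {B : Set (Matrix (Fin I) (Fin J) ℝ)}

theorem convex_dualCone : Convex ℝ (dualCone B) := by
  intro X hX Y hY a b ha hb _ M hM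
  simp only [Matrix.mul_add, Matrix.mul_smul, trace_add, trace_smul, smul_eq_mul]
  exact add_nonneg (mul_nonneg ha (hX M hM)) (mul_nonneg hb (hY M hM))

theorem smul_mem_interior_dualCone {t : ℝ} (ht : 0 < t) {N : Matrix (Fin I) (Fin J) ℝ}
    (hN : N ∈ interior (dualCone B)) : t • N ∈ interior (dualCone B) := by
  have hsub : t • dualCone B ⊆ dualCone B := by
    rintro _ ⟨X, hX, rfl⟩ M hM
    simpa using mul_nonneg ht.le (hX M hM)
  have htN : t • N ∈ interior (t • dualCone B) := by
    rw [interior_smul₀ ht.ne']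
    exact smul_mem_smul_set hN
  exact interior_mono hsub htN

theorem mem_interior_dualCone_of_forall_pos (hBc : IsCompact B) {N : Matrix (Fin I) (Fin J) ℝ}
    (hN : ∀ M ∈ B, 0 < (Mᵀ * N).trace) : N ∈ interior (dualCone B) := by
  have hcont : Continuous fun p : Matrix (Fin I) (Fin J) ℝ × Matrix (Fin I) (Fin J) ℝ =>
      (p.2ᵀ * p.1).trace := by fun_prop
  refine mem_interior_iff_mem_nhds.2 ?_
  have hpos : ∀ᶠ N' in 𝓝 N, ∀ M ∈ B, 0 < (Mᵀ * N').trace := by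
    refine hBc.eventually_forall_of_forall_eventually fun M hM => ?_
    exact hcont.continuousAt.eventually (Ioi_mem_nhds (hN M hM))
  filter_upwards [hpos] with N' hN' M hM
  exact (hN' M hM).le

theorem trace_transpose_mul_pos_of_mem_interior_dualCone {M N : Matrix (Fin I) (Fin J) ℝ}
    (hM : M ∈ B) (hM0 : M ≠ 0) (hN : N ∈ interior (dualCone B)) : 0 < (Mᵀ * N).trace := by
  have hnhds : ∀ᶠ t in 𝓝 (0 : ℝ), N - t • M ∈ dualCone B :=
    ((continuous_const.sub (continuous_id.smul continuous_const)).tendsto' 0 N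
      (by simp)).eventually (mem_interior_iff_mem_nhds.1 hN)
  obtain ⟨t, htK, ht⟩ :=
    ((hnhds.filter_mono (nhdsWithin_le_nhds (s := Ioi 0))).and self_mem_nhdsWithin).exists
  have := htK M hM
  simp only [Matrix.mul_sub, Matrix.mul_smul, trace_sub, trace_smul, smul_eq_mul] at this
  nlinarith [trace_transpose_mul_self_pos hM0]

theorem nonempty_interior_dualCone (hBc : IsCompact B) (hBconv : Convex ℝ B)
    (hB0 : (0 : Matrix (Fin I) (Fin J) ℝ) ∉ B) : (interior (dualCone B)).Nonempty := by
  obtain ⟨g, hg⟩ := exists_strongDual_pos_of_zero_notMem hBc.isClosed hBconv hB0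
  obtain ⟨n₀, hn₀⟩ := exists_eq_trace_transpose_mul (g : Matrix (Fin I) (Fin J) ℝ →ₗ[ℝ] ℝ)
  refine ⟨n₀, mem_interior_dualCone_of_forall_pos hBc fun M hM => ?_⟩
  rw [trace_transpose_mul_comm, ← hn₀]
  exact hg M hM

theorem mem_Ici_smul_of_mem_dualCone_dualCone (hBc : IsCompact B) (hBconv : Convex ℝ B)
    (hB0 : (0 : Matrix (Fin I) (Fin J) ℝ) ∉ B) (hBne : B.Nonempty)
    {N : Matrix (Fin I) (Fin J) ℝ} (hN : N ∈ dualCone (dualCone B)) : N ∈ Ici (0 : ℝ) • B := by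
  by_contra hN'
  obtain ⟨f, v, hfC, hfN⟩ := geometric_hahn_banach_closed_point (convex_Ici_smul hBconv)
    (isClosed_Ici_smul hBc hBconv hB0) hN'
  obtain ⟨M₀, hM₀⟩ := hBne
  have hv : 0 < v := by simpa using hfC 0 ⟨0, self_mem_Ici, M₀, hM₀, zero_smul ℝ M₀⟩
  -- `f < v` on the whole ray `Ici 0 • {M}` through each `M ∈ B`
  have hfB : ∀ M ∈ B, f M ≤ 0 := by
    intro M hM
    by_contra! hfM
    have := hfC _ ⟨v / f M, (div_pos hv hfM).le, M, hM, rfl⟩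
    rw [map_smul, smul_eq_mul, div_mul_cancel₀ _ hfM.ne'] at this
    exact this.false
  obtain ⟨W, hW⟩ := exists_eq_trace_transpose_mul (f : Matrix (Fin I) (Fin J) ℝ →ₗ[ℝ] ℝ)
  simp only [ContinuousLinearMap.coe_coe] at hW
  have hW_dual : -W ∈ dualCone B := fun M hM => by
    have := hfB M hM
    rw [hW, trace_transpose_mul_comm] at this
    simpa [Matrix.mul_neg, trace_neg] using this
  have := hN _ hW_dual
  rw [hW] at hfN
  simp only [transpose_neg, Matrix.neg_mul, trace_neg, neg_nonneg] at this
  linarith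

theorem exists_mem_dualCone_dualCone_isMaxOn (hBc : IsCompact B) (hBconv : Convex ℝ B)
    (hB0 : (0 : Matrix (Fin I) (Fin J) ℝ) ∉ B) {S : Set (Matrix (Fin I) (Fin J) ℝ)}
    (hS : Convex ℝ S) {σ : Matrix (Fin I) (Fin J) ℝ} (hσ : σ ∈ S)
    (h : ∀ X ∈ S, X - σ ∉ interior (dualCone B)) :
    ∃ N ∈ dualCone (dualCone B), N ≠ 0 ∧ IsMaxOn (fun X => (Nᵀ * X).trace) S σ := by
  have hne := nonempty_interior_dualCone hBc hBconv hB0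
  obtain ⟨f, hf_neg, hf_min⟩ := exists_strongDual_neg_isMinOn_of_disjoint_cone isOpen_interior
    convex_dualCone.interior (fun k hk t ht => smul_mem_interior_dualCone ht hk) hne hS hσ h
  obtain ⟨W, hW⟩ := exists_eq_trace_transpose_mul (f : Matrix (Fin I) (Fin J) ℝ →ₗ[ℝ] ℝ)
  simp only [ContinuousLinearMap.coe_coe] at hW
  refine ⟨-W, fun k hk => ?_, ?_, isMaxOn_iff.2 fun X hX => ?_⟩
  · -- `0 ≤ Tr((-W)ᵀ k)` is a closed condition, true on `interior K`, whose closure contains `K`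
    have hpos : ∀ k ∈ interior (dualCone B), 0 ≤ (kᵀ * -W).trace := fun k hk => by
      have := hf_neg k hk
      rw [hW, trace_transpose_mul_comm] at this
      simpa [Matrix.mul_neg, trace_neg] using this.le
    have hsub : closure (interior (dualCone B)) ⊆ {k | 0 ≤ (kᵀ * -W).trace} :=
      closure_minimal hpos (isClosed_le continuous_const (by fun_prop))
    rw [convex_dualCone.closure_interior_eq_closure_of_nonempty_interior hne] at hsub
    exact hsub (subset_closure hk)
  · rintro hW0
    obtain ⟨k, hk⟩ := hne
    have := hf_neg k hk
    simp [hW, neg_eq_zero.1 hW0] at this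
  · have := isMinOn_iff.1 hf_min X hX
    simp only [hW] at this
    simpa [transpose_neg, Matrix.neg_mul, trace_neg] using this

theorem exists_isMaxOn_of_forall_sub_notMem_interior_dualCone (hBc : IsCompact B)
    (hBconv : Convex ℝ B) (hB0 : (0 : Matrix (Fin I) (Fin J) ℝ) ∉ B)
    {S : Set (Matrix (Fin I) (Fin J) ℝ)} (hS : Convex ℝ S) {σ : Matrix (Fin I) (Fin J) ℝ}
    (hσ : σ ∈ S) (h : ∀ X ∈ S, X - σ ∉ interior (dualCone B)) :
    ∃ M ∈ B, IsMaxOn (fun X => (Mᵀ * X).trace) S σ := by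
  have hBne : B.Nonempty :=
    nonempty_iff_ne_empty.2 (by rintro rfl; exact h σ hσ (by simp [dualCone]))
  obtain ⟨N, hN, hN0, hmax⟩ := exists_mem_dualCone_dualCone_isMaxOn hBc hBconv hB0 hS hσ h
  obtain ⟨c, hc, M, hM, rfl⟩ := mem_Ici_smul_of_mem_dualCone_dualCone hBc hBconv hB0 hBne hN
  have hc0 : 0 < c := (mem_Ici.1 hc).lt_of_ne (by rintro rfl; simp at hN0)
  refine ⟨M, hM, isMaxOn_iff.2 fun X hX => ?_⟩
  have := isMaxOn_iff.1 hmax X hX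
  simp only [transpose_smul, Matrix.smul_mul, trace_smul, smul_eq_mul] at this
  exact le_of_mul_le_mul_left this hc0

theorem sub_notMem_interior_dualCone_of_isMaxOn (hB0 : (0 : Matrix (Fin I) (Fin J) ℝ) ∉ B)
    {M : Matrix (Fin I) (Fin J) ℝ} (hM : M ∈ B) {S : Set (Matrix (Fin I) (Fin J) ℝ)}
    {σ : Matrix (Fin I) (Fin J) ℝ} (hmax : IsMaxOn (fun X => (Mᵀ * X).trace) S σ)
    {X : Matrix (Fin I) (Fin J) ℝ} (hX : X ∈ S) : X - σ ∉ interior (dualCone B) := by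
  intro hint
  have := trace_transpose_mul_pos_of_mem_interior_dualCone hM (ne_of_mem_of_not_mem hM hB0) hint
  rw [Matrix.mul_sub, trace_sub] at this
  linarith [isMaxOn_iff.1 hmax X hX]

theorem forall_sub_notMem_interior_dualCone_iff (hBc : IsCompact B) (hBconv : Convex ℝ B)
    (hB0 : (0 : Matrix (Fin I) (Fin J) ℝ) ∉ B) {S : Set (Matrix (Fin I) (Fin J) ℝ)}
    (hS : Convex ℝ S) {σ : Matrix (Fin I) (Fin J) ℝ} (hσ : σ ∈ S) :
    (∀ X ∈ S, X - σ ∉ interior (dualCone B)) ↔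
      ∃ M ∈ B, IsMaxOn (fun X => (Mᵀ * X).trace) S σ :=
  ⟨exists_isMaxOn_of_forall_sub_notMem_interior_dualCone hBc hBconv hB0 hS hσ,
    fun ⟨_, hM, hmax⟩ _ hX => sub_notMem_interior_dualCone_of_isMaxOn hB0 hM hmax hX⟩

end DualCone

section Couplings

variable {I J : ℕ} {P : Measure (Fin I → ℝ)} {Q : Measure (Fin J → ℝ)}
  {π : Measure ((Fin I → ℝ) × (Fin J → ℝ))}

theorem abs_mul_apply_le {ι κ : Type*} [Fintype ι] [Fintype κ] (x : ι → ℝ) (y : κ → ℝ)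
    (i : ι) (j : κ) : |x i * y j| ≤ (‖x‖ ^ 2 + ‖y‖ ^ 2) / 2 := by
  rw [abs_mul]
  have hxy : |x i| * |y j| ≤ ‖x‖ * ‖y‖ :=
    mul_le_mul (norm_le_pi_norm x i) (norm_le_pi_norm y j) (abs_nonneg _) (norm_nonneg _)
  nlinarith [sq_nonneg (‖x‖ - ‖y‖)]

theorem integrable_half_sq_norm_add (hπ : π ∈ couplings P Q)
    (hP : Integrable (fun x => ‖x‖ ^ 2) P) (hQ : Integrable (fun y => ‖y‖ ^ 2) Q) :
    Integrable (fun p => (‖p.1‖ ^ 2 + ‖p.2‖ ^ 2) / 2) π := by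
  rw [← hπ.2.1] at hP
  rw [← hπ.2.2] at hQ
  exact ((hP.comp_measurable measurable_fst).add (hQ.comp_measurable measurable_snd)).div_const 2

theorem integral_half_sq_norm_add (hπ : π ∈ couplings P Q)
    (hP : Integrable (fun x => ‖x‖ ^ 2) P) (hQ : Integrable (fun y => ‖y‖ ^ 2) Q) :
    ∫ p, (‖p.1‖ ^ 2 + ‖p.2‖ ^ 2) / 2 ∂π = ((∫ x, ‖x‖ ^ 2 ∂P) + ∫ y, ‖y‖ ^ 2 ∂Q) / 2 := by
  rw [← hπ.2.1] at hP ⊢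
  rw [← hπ.2.2] at hQ ⊢
  have h₁ : Integrable (fun p : (Fin I → ℝ) × (Fin J → ℝ) => ‖p.1‖ ^ 2) π :=
    hP.comp_measurable measurable_fst
  have h₂ : Integrable (fun p : (Fin I → ℝ) × (Fin J → ℝ) => ‖p.2‖ ^ 2) π :=
    hQ.comp_measurable measurable_snd
  rw [integral_div, integral_add h₁ h₂, integral_map measurable_fst.aemeasurable (by fun_prop),
    integral_map measurable_snd.aemeasurable (by fun_prop)]

theorem integrable_mul_apply (hπ : π ∈ couplings P Q)
    (hP : Integrable (fun x => ‖x‖ ^ 2) P) (hQ : Integrable (fun y => ‖y‖ ^ 2) Q)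
    (i : Fin I) (j : Fin J) : Integrable (fun p => p.1 i * p.2 j) π :=
  (integrable_half_sq_norm_add hπ hP hQ).mono' (by fun_prop)
    (ae_of_all _ fun p => abs_mul_apply_le p.1 p.2 i j)

theorem abs_crossCov_apply_le (hπ : π ∈ couplings P Q)
    (hP : Integrable (fun x => ‖x‖ ^ 2) P) (hQ : Integrable (fun y => ‖y‖ ^ 2) Q)
    (i : Fin I) (j : Fin J) :
    |crossCov π i j| ≤ ((∫ x, ‖x‖ ^ 2 ∂P) + ∫ y, ‖y‖ ^ 2 ∂Q) / 2 :=
  calc |crossCov π i j| = ‖∫ p, p.1 i * p.2 j ∂π‖ := rfl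
    _ ≤ ∫ p, (‖p.1‖ ^ 2 + ‖p.2‖ ^ 2) / 2 ∂π :=
      norm_integral_le_of_norm_le (integrable_half_sq_norm_add hπ hP hQ)
        (ae_of_all _ fun p => abs_mul_apply_le p.1 p.2 i j)
    _ = _ := integral_half_sq_norm_add hπ hP hQ

theorem mixture_mem_couplings {π₁ π₂ : Measure ((Fin I → ℝ) × (Fin J → ℝ))}
    (h₁ : π₁ ∈ couplings P Q) (h₂ : π₂ ∈ couplings P Q) {a b : ℝ} (ha : 0 ≤ a) (hb : 0 ≤ b)
    (hab : a + b = 1) : ENNReal.ofReal a • π₁ + ENNReal.ofReal b • π₂ ∈ couplings P Q := by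
  have hab' : ENNReal.ofReal a + ENNReal.ofReal b = 1 := by
    rw [← ENNReal.ofReal_add ha hb, hab, ENNReal.ofReal_one]
  have := h₁.1
  have := h₂.1
  refine ⟨⟨by simp [hab']⟩, ?_, ?_⟩
  · rw [Measure.map_add _ _ measurable_fst, Measure.map_smul, Measure.map_smul, h₁.2.1, h₂.2.1,
      ← add_smul, hab', one_smul]
  · rw [Measure.map_add _ _ measurable_snd, Measure.map_smul, Measure.map_smul, h₁.2.2, h₂.2.2,
      ← add_smul, hab', one_smul]

theorem crossCov_mixture {π₁ π₂ : Measure ((Fin I → ℝ) × (Fin J → ℝ))}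
    (h₁ : ∀ i j, Integrable (fun p => p.1 i * p.2 j) π₁)
    (h₂ : ∀ i j, Integrable (fun p => p.1 i * p.2 j) π₂) {a b : ℝ} (ha : 0 ≤ a) (hb : 0 ≤ b) :
    crossCov (ENNReal.ofReal a • π₁ + ENNReal.ofReal b • π₂) =
      a • crossCov π₁ + b • crossCov π₂ := by
  ext i j
  simp only [crossCov, of_apply, Matrix.add_apply, Matrix.smul_apply, smul_eq_mul]
  rw [integral_add_measure ((h₁ i j).smul_measure ENNReal.ofReal_ne_top)
      ((h₂ i j).smul_measure ENNReal.ofReal_ne_top), integral_smul_measure, integral_smul_measure,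
    ENNReal.toReal_ofReal ha, ENNReal.toReal_ofReal hb, smul_eq_mul, smul_eq_mul]

theorem convex_crossCov_image (hP : Integrable (fun x => ‖x‖ ^ 2) P)
    (hQ : Integrable (fun y => ‖y‖ ^ 2) Q) : Convex ℝ (crossCov '' couplings P Q) := by
  rintro - ⟨π₁, h₁, rfl⟩ - ⟨π₂, h₂, rfl⟩ a b ha hb hab
  exact ⟨_, mixture_mem_couplings h₁ h₂ ha hb hab,
    crossCov_mixture (integrable_mul_apply h₁ hP hQ) (integrable_mul_apply h₂ hP hQ) ha hb⟩

end Couplings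

theorem positive_extreme_iff_general {I J : ℕ}
    (P : Measure (Fin I → ℝ)) (Q : Measure (Fin J → ℝ))
    (hP : Integrable (fun x => ‖x‖ ^ 2) P) (hQ : Integrable (fun y => ‖y‖ ^ 2) Q)
    (B : Set (Matrix (Fin I) (Fin J) ℝ))
    (hBcompact : IsCompact B) (hBconvex : Convex ℝ B) (hB0 : (0 : Matrix (Fin I) (Fin J) ℝ) ∉ B)
    (π : Measure ((Fin I → ℝ) × (Fin J → ℝ))) (hπ : π ∈ couplings P Q) :
    (¬ ∃ π' ∈ couplings P Q, crossCov π' - crossCov π ∈ interior (dualCone B)) ↔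
      ∃ M ∈ B, (M.transpose * crossCov π).trace =
        sSup ((fun π' => (M.transpose * crossCov π').trace) '' couplings P Q) := by
  have hσ : crossCov π ∈ crossCov '' couplings P Q := mem_image_of_mem crossCov hπ
  have key := forall_sub_notMem_interior_dualCone_iff hBcompact hBconvex hB0
    (convex_crossCov_image hP hQ) hσ
  rw [forall_mem_image] at key
  push Not
  rw [key]
  refine exists_congr fun M => and_congr_right fun _ => ?_
  rw [isMaxOn_iff_eq_csSup hσ (bddAbove_trace_transpose_mul_image
    (forall_mem_image.2 fun _ hπ' => abs_crossCov_apply_le hπ' hP hQ) M), image_image]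

/-- a coupling has positive extreme dependence w.r.t. a compact basis `B`
(i.e. no coupling strictly dominates it in the conic order with cone `K(B)`) iff there is
`M ∈ B` with `Tr(Mᵀ σ_π) = sup_{π̃} Tr(Mᵀ σ_{π̃})`. -/
theorem positive_extreme_iff {I J : ℕ} (hI : 0 < I) (hJ : 0 < J)
    (P : Measure (Fin I → ℝ)) (Q : Measure (Fin J → ℝ))
    [IsProbabilityMeasure P] [IsProbabilityMeasure Q]
    (hP : Integrable (fun x => ‖x‖ ^ 2) P) (hQ : Integrable (fun y => ‖y‖ ^ 2) Q)
    (B : Set (Matrix (Fin I) (Fin J) ℝ))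
    (hBcompact : IsCompact B) (hBconvex : Convex ℝ B) (hB0 : (0 : Matrix (Fin I) (Fin J) ℝ) ∉ B)
    (π : Measure ((Fin I → ℝ) × (Fin J → ℝ))) (hπ : π ∈ couplings P Q) :
    (¬ ∃ π' ∈ couplings P Q, crossCov π' - crossCov π ∈ interior (dualCone B)) ↔
      ∃ M ∈ B, (M.transpose * crossCov π).trace =
        sSup ((fun π' => (M.transpose * crossCov π').trace) '' couplings P Q) :=
  positive_extreme_iff_general P Q hP hQ B hBcompact hBconvex hB0 π hπ
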